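/- Let H be a real inner product space and let p be a real number with p ≥ 2. Then for all y, k ∈ H, | ‖y + k‖^p − ‖y‖^p − p‖y‖^{p−2}⟨y, k⟩ | ≤ (p² − p)·2^{p−3}·( ‖y‖^{p−2}‖k‖² + ‖k‖^p ), where ⟨·,·⟩ denotes the inner product and ‖·‖ the associated norm (with the convention 0^{p−2} = 0 when p > 2). -/

import Mathlib

open Real intervalIntegral

/-- Scalar key inequality: for `0 ≤ b ≤ a` and `0 ≤ q`,
`(a^q - b^q) * b ≤ q * a^q * (a - b)`. -/
private lemma aux_scalar {a b q : ℝ} (hb : 0 ≤ b) (hba : b ≤ a) (hq : 0 ≤ q) :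
    (a ^ q - b ^ q) * b ≤ q * a ^ q * (a - b) := by
  have ha : (0:ℝ) ≤ a := hb.trans hba
  have hbq : b ^ q ≤ a ^ q := Real.rpow_le_rpow hb hba hq
  have haq : (0:ℝ) ≤ a ^ q := Real.rpow_nonneg ha q
  rcases eq_or_lt_of_le hb with rfl | hb'
  · simpa using mul_nonneg (mul_nonneg hq haq) (by linarith)
  rcases le_or_gt q 1 with hq1 | hq1
  · -- use Bernoulli (1+s)^q ≤ 1 + q s with s = a/b - 1 ≥ 0
    have hs : (-1:ℝ) ≤ a / b - 1 := by
      have : 0 ≤ a / b := div_nonneg ha hb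
      linarith
    have key := rpow_one_add_le_one_add_mul_self hs hq hq1
    have h1b : (1:ℝ) + (a / b - 1) = a / b := by ring
    rw [h1b] at key
    have hbqpos : (0:ℝ) < b ^ q := Real.rpow_pos_of_pos hb' q
    have hdiv : (a / b) ^ q = a ^ q / b ^ q := Real.div_rpow ha hb q
    rw [hdiv] at key
    -- a^q ≤ b^q * (1 + q*(a/b-1))
    have h2 : a ^ q ≤ b ^ q + q * (a / b - 1) * b ^ q := by
      have := mul_le_mul_of_nonneg_right key hbqpos.le
      rw [div_mul_cancel₀ _ hbqpos.ne'] at this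
      linarith [this]
    have h3 : (a / b - 1) * b = a - b := by field_simp
    -- (a^q - b^q) * b ≤ q * b^q * (a-b) ≤ q * a^q * (a-b)
    have h4 : (a ^ q - b ^ q) * b ≤ q * b ^ q * (a - b) := by
      have := mul_le_mul_of_nonneg_right (sub_le_iff_le_add'.2 h2) hb
      calc (a ^ q - b ^ q) * b ≤ q * (a / b - 1) * b ^ q * b := this
        _ = q * b ^ q * ((a / b - 1) * b) := by ring
        _ = q * b ^ q * (a - b) := by rw [h3]
    refine h4.trans ?_
    have : (0:ℝ) ≤ a - b := by linarith
    have := mul_le_mul_of_nonneg_right (mul_le_mul_of_nonneg_left hbq hq) this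
    linarith [this]
  · -- use Bernoulli 1 + q s ≤ (1+s)^q with s = b/a - 1 ∈ [-1,0]
    have hapos : (0:ℝ) < a := lt_of_lt_of_le hb' hba
    have hs : (-1:ℝ) ≤ b / a - 1 := by
      have : 0 ≤ b / a := div_nonneg hb ha
      linarith
    have key := one_add_mul_self_le_rpow_one_add hs hq1.le
    have h1b : (1:ℝ) + (b / a - 1) = b / a := by ring
    rw [h1b] at key
    have hdiv : (b / a) ^ q = b ^ q / a ^ q := Real.div_rpow hb ha q
    rw [hdiv] at key
    have haqpos : (0:ℝ) < a ^ q := Real.rpow_pos_of_pos hapos q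
    -- a^q + q*(b/a-1)*a^q ≤ b^q
    have h2 : a ^ q + q * (b / a - 1) * a ^ q ≤ b ^ q := by
      have := mul_le_mul_of_nonneg_right key haqpos.le
      rw [div_mul_cancel₀ _ haqpos.ne'] at this
      linarith [this]
    -- a^q - b^q ≤ q * a^q * ((a - b)/a)
    have h3 : (b / a - 1) * a = b - a := by field_simp
    have h4 : (a ^ q - b ^ q) * b ≤ q * a ^ q * ((a - b) / a) * b := by
      have hx : a ^ q - b ^ q ≤ q * a ^ q * ((a - b) / a) := by
        have heq : q * a ^ q * ((a - b) / a) = -(q * (b / a - 1) * a ^ q) := by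
          field_simp; ring
        rw [heq]; linarith
      exact mul_le_mul_of_nonneg_right hx hb
    refine h4.trans ?_
    have hfrac : (a - b) / a * b ≤ (a - b) := by
      rw [div_mul_eq_mul_div, div_le_iff₀ hapos]
      nlinarith
    calc q * a ^ q * ((a - b) / a) * b = q * a ^ q * ((a - b) / a * b) := by ring
      _ ≤ q * a ^ q * (a - b) := by
          exact mul_le_mul_of_nonneg_left hfrac (mul_nonneg hq haq)

/-- Lipschitz-type estimate for `x ↦ ‖x‖^q ⟪x,k⟫`, ordered version. -/
private lemma aux_inner_le {H : Type*} [NormedAddCommGroup H] [InnerProductSpace ℝ H]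
    {q : ℝ} (hq : 0 ≤ q) (u v k : H) (hvu : ‖v‖ ≤ ‖u‖) :
    |‖u‖ ^ q * (inner ℝ u k : ℝ) - ‖v‖ ^ q * (inner ℝ v k : ℝ)| ≤
      (1 + q) * ‖u‖ ^ q * (‖u - v‖ * ‖k‖) := by
  have hu : (0:ℝ) ≤ ‖u‖ := norm_nonneg u
  have hv : (0:ℝ) ≤ ‖v‖ := norm_nonneg v
  have huq : (0:ℝ) ≤ ‖u‖ ^ q := Real.rpow_nonneg hu q
  have hvq : ‖v‖ ^ q ≤ ‖u‖ ^ q := Real.rpow_le_rpow hv hvu hq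
  have key : ‖u‖ ^ q * (inner ℝ u k : ℝ) - ‖v‖ ^ q * (inner ℝ v k : ℝ)
      = ‖u‖ ^ q * (inner ℝ (u - v) k : ℝ) + (‖u‖ ^ q - ‖v‖ ^ q) * (inner ℝ v k : ℝ) := by
    rw [inner_sub_left]; ring
  rw [key]
  refine (abs_add_le _ _).trans ?_
  have h1 : |‖u‖ ^ q * (inner ℝ (u - v) k : ℝ)| ≤ ‖u‖ ^ q * (‖u - v‖ * ‖k‖) := by
    rw [abs_mul, abs_of_nonneg huq]
    exact mul_le_mul_of_nonneg_left (abs_real_inner_le_norm _ _) huq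
  have h2 : |(‖u‖ ^ q - ‖v‖ ^ q) * (inner ℝ v k : ℝ)| ≤ q * ‖u‖ ^ q * (‖u - v‖ * ‖k‖) := by
    rw [abs_mul, abs_of_nonneg (by linarith : (0:ℝ) ≤ ‖u‖ ^ q - ‖v‖ ^ q)]
    have hCS : |(inner ℝ v k : ℝ)| ≤ ‖v‖ * ‖k‖ := abs_real_inner_le_norm v k
    calc (‖u‖ ^ q - ‖v‖ ^ q) * |(inner ℝ v k : ℝ)|
        ≤ (‖u‖ ^ q - ‖v‖ ^ q) * (‖v‖ * ‖k‖) :=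
          mul_le_mul_of_nonneg_left hCS (by linarith)
      _ = ((‖u‖ ^ q - ‖v‖ ^ q) * ‖v‖) * ‖k‖ := by ring
      _ ≤ (q * ‖u‖ ^ q * (‖u‖ - ‖v‖)) * ‖k‖ :=
          mul_le_mul_of_nonneg_right (aux_scalar hv hvu hq) (norm_nonneg k)
      _ ≤ (q * ‖u‖ ^ q * ‖u - v‖) * ‖k‖ := by
          refine mul_le_mul_of_nonneg_right ?_ (norm_nonneg k)
          exact mul_le_mul_of_nonneg_left (norm_sub_norm_le u v) (mul_nonneg hq huq)
      _ = q * ‖u‖ ^ q * (‖u - v‖ * ‖k‖) := by ring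
  calc |‖u‖ ^ q * (inner ℝ (u - v) k : ℝ)| + |(‖u‖ ^ q - ‖v‖ ^ q) * (inner ℝ v k : ℝ)|
      ≤ ‖u‖ ^ q * (‖u - v‖ * ‖k‖) + q * ‖u‖ ^ q * (‖u - v‖ * ‖k‖) := add_le_add h1 h2
    _ = (1 + q) * ‖u‖ ^ q * (‖u - v‖ * ‖k‖) := by ring

/-- Lipschitz-type estimate for `x ↦ ‖x‖^q ⟪x,k⟫`. -/
private lemma aux_inner {H : Type*} [NormedAddCommGroup H] [InnerProductSpace ℝ H]
    {q : ℝ} (hq : 0 ≤ q) (u v k : H) :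
    |‖u‖ ^ q * (inner ℝ u k : ℝ) - ‖v‖ ^ q * (inner ℝ v k : ℝ)| ≤
      (1 + q) * max ‖u‖ ‖v‖ ^ q * (‖u - v‖ * ‖k‖) := by
  rcases le_total ‖v‖ ‖u‖ with h | h
  · rw [max_eq_left h]
    exact aux_inner_le hq u v k h
  · rw [max_eq_right h, ← norm_neg (u - v), neg_sub]
    rw [show ‖u‖ ^ q * (inner ℝ u k : ℝ) - ‖v‖ ^ q * (inner ℝ v k : ℝ)
      = -(‖v‖ ^ q * (inner ℝ v k : ℝ) - ‖u‖ ^ q * (inner ℝ u k : ℝ)) by ring, abs_neg]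
    exact aux_inner_le hq v u k h

private lemma inner_self_rpow {H : Type*} [NormedAddCommGroup H] [InnerProductSpace ℝ H]
    (x : H) (r : ℝ) : (inner ℝ x x : ℝ) ^ r = ‖x‖ ^ (2 * r) := by
  rw [real_inner_self_eq_norm_sq, ← Real.rpow_natCast ‖x‖ 2,
    ← Real.rpow_mul (norm_nonneg x)]
  norm_num

/-- Second-order Taylor-type inequality for the `p`-th power of the Hilbert norm:
`| ‖y+k‖^p − ‖y‖^p − p‖y‖^{p−2}⟨y,k⟩ | ≤ (p²−p)·2^{p−3}·(‖y‖^{p−2}‖k‖² + ‖k‖^p)`. -/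
theorem abs_norm_add_rpow_sub_le
    {H : Type*} [NormedAddCommGroup H] [InnerProductSpace ℝ H]
    (p : ℝ) (hp : 2 ≤ p) (y k : H) :
    |‖y + k‖ ^ p - ‖y‖ ^ p - p * ‖y‖ ^ (p - 2) * (inner ℝ y k : ℝ)| ≤
      (p ^ 2 - p) * (2 : ℝ) ^ (p - 3) * (‖y‖ ^ (p - 2) * ‖k‖ ^ (2 : ℝ) + ‖k‖ ^ p) := by
  have hp0 : (0:ℝ) < p := by linarith
  have hq0 : (0:ℝ) ≤ p - 2 := by linarith
  set g : ℝ → ℝ := fun t => p * ‖y + t • k‖ ^ (p - 2) * (inner ℝ (y + t • k) k : ℝ) with hg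
  -- derivative of f t = ‖y + t k‖^p
  have hderiv : ∀ t : ℝ, HasDerivAt (fun s : ℝ => ‖y + s • k‖ ^ p) (g t) t := by
    intro t
    have hA : HasDerivAt (fun s : ℝ => y + s • k) k t := by
      simpa using ((hasDerivAt_id t).smul_const k).const_add y
    have hφ : HasDerivAt (fun s : ℝ => (inner ℝ (y + s • k) (y + s • k) : ℝ))
        (2 * (inner ℝ (y + t • k) k : ℝ)) t := by
      have := hA.inner ℝ hA
      refine this.congr_deriv ?_
      rw [real_inner_comm]
      ring
    have hrpow : HasDerivAt (fun x : ℝ => x ^ (p / 2))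
        ((p / 2) * (inner ℝ (y + t • k) (y + t • k) : ℝ) ^ (p / 2 - 1))
        ((inner ℝ (y + t • k) (y + t • k) : ℝ)) :=
      Real.hasDerivAt_rpow_const (Or.inr (by linarith))
    have hcomp := hrpow.comp t hφ
    have hfun : (fun s : ℝ => ((inner ℝ (y + s • k) (y + s • k) : ℝ)) ^ (p / 2))
        = fun s : ℝ => ‖y + s • k‖ ^ p := by
      funext s
      rw [inner_self_rpow, show 2 * (p / 2) = p by ring]
    rw [Function.comp_def, hfun] at hcomp
    refine hcomp.congr_deriv ?_
    rw [inner_self_rpow, hg]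
    rw [show 2 * (p / 2 - 1) = p - 2 by ring]
    ring
  -- h t = f t - f 0 - t * g 0
  set h : ℝ → ℝ := fun t => ‖y + t • k‖ ^ p - ‖y‖ ^ p - t * g 0 with hh
  have hhderiv : ∀ t : ℝ, HasDerivAt h (g t - g 0) t := by
    intro t
    have := ((hderiv t).sub_const (‖y‖ ^ p)).sub ((hasDerivAt_id t).mul_const (g 0))
    exact this.congr_deriv (by ring)
  have hgcont : Continuous g := by
    have h1 : Continuous fun t : ℝ => y + t • k :=
      continuous_const.add (continuous_id.smul continuous_const)
    have h2 : Continuous fun t : ℝ => ‖y + t • k‖ ^ (p - 2) :=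
      h1.norm.rpow_const (fun t => Or.inr hq0)
    have h3 : Continuous fun t : ℝ => (inner ℝ (y + t • k) k : ℝ) :=
      h1.inner continuous_const
    exact (continuous_const.mul h2).mul h3
  have hint : IntervalIntegrable (fun t => g t - g 0) MeasureTheory.volume 0 1 :=
    (hgcont.sub continuous_const).intervalIntegrable 0 1
  have hFTC : ∫ t in (0:ℝ)..1, (g t - g 0) = h 1 - h 0 :=
    intervalIntegral.integral_eq_sub_of_hasDerivAt (fun t _ => hhderiv t) hint
  have hh0 : h 0 = 0 := by simp [hh]
  have hh1 : h 1 = ‖y + k‖ ^ p - ‖y‖ ^ p - p * ‖y‖ ^ (p - 2) * (inner ℝ y k : ℝ) := by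
    simp [hh, hg]
  set M : ℝ := ‖y‖ + ‖k‖ with hM
  set L : ℝ := p * (p - 1) * M ^ (p - 2) * (‖k‖ * ‖k‖) with hL
  have hM0 : (0:ℝ) ≤ M := add_nonneg (norm_nonneg y) (norm_nonneg k)
  have hMq : (0:ℝ) ≤ M ^ (p - 2) := Real.rpow_nonneg hM0 _
  have hL0 : (0:ℝ) ≤ L :=
    mul_nonneg (mul_nonneg (mul_nonneg hp0.le (by linarith)) hMq)
      (mul_nonneg (norm_nonneg k) (norm_nonneg k))
  -- pointwise bound |g t - g 0| ≤ L * t on [0,1]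
  have hbound : ∀ t ∈ Set.Icc (0:ℝ) 1, |g t - g 0| ≤ L * t := by
    intro t ht
    obtain ⟨ht0, ht1⟩ := ht
    have hud : (y + t • k) - (y + (0:ℝ) • k) = t • k := by
      simp [sub_eq_iff_eq_add]
    have hkey := aux_inner hq0 (y + t • k) (y + (0:ℝ) • k) k
    rw [hud] at hkey
    have hg0 : g 0 = p * ‖y + (0:ℝ) • k‖ ^ (p - 2) * (inner ℝ (y + (0:ℝ) • k) k : ℝ) := rfl
    have hdiff : g t - g 0 = p * (‖y + t • k‖ ^ (p - 2) * (inner ℝ (y + t • k) k : ℝ)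
        - ‖y + (0:ℝ) • k‖ ^ (p - 2) * (inner ℝ (y + (0:ℝ) • k) k : ℝ)) := by
      rw [hg0, hg]; ring
    rw [hdiff, abs_mul, abs_of_pos hp0]
    have hmax : max ‖y + t • k‖ ‖y + (0:ℝ) • k‖ ≤ M := by
      refine max_le ?_ ?_
      · calc ‖y + t • k‖ ≤ ‖y‖ + ‖t • k‖ := norm_add_le _ _
          _ = ‖y‖ + t * ‖k‖ := by rw [norm_smul, Real.norm_eq_abs, abs_of_nonneg ht0]
          _ ≤ M := by
              have := mul_le_of_le_one_left (norm_nonneg k) ht1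
              rw [hM]; linarith
      · simp only [zero_smul, add_zero, hM]; linarith [norm_nonneg k]
    have hmaxq : max ‖y + t • k‖ ‖y + (0:ℝ) • k‖ ^ (p - 2) ≤ M ^ (p - 2) :=
      Real.rpow_le_rpow (le_max_iff.2 (Or.inl (norm_nonneg _))) hmax hq0
    have htk : ‖t • k‖ = t * ‖k‖ := by
      rw [norm_smul, Real.norm_eq_abs, abs_of_nonneg ht0]
    calc p * |‖y + t • k‖ ^ (p - 2) * (inner ℝ (y + t • k) k : ℝ)
          - ‖y + (0:ℝ) • k‖ ^ (p - 2) * (inner ℝ (y + (0:ℝ) • k) k : ℝ)|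
        ≤ p * ((1 + (p - 2)) * max ‖y + t • k‖ ‖y + (0:ℝ) • k‖ ^ (p - 2) * (‖t • k‖ * ‖k‖)) :=
          mul_le_mul_of_nonneg_left hkey hp0.le
      _ ≤ p * ((1 + (p - 2)) * M ^ (p - 2) * (‖t • k‖ * ‖k‖)) := by
          refine mul_le_mul_of_nonneg_left ?_ hp0.le
          refine mul_le_mul_of_nonneg_right
            (mul_le_mul_of_nonneg_left hmaxq (by linarith)) ?_
          exact mul_nonneg (norm_nonneg _) (norm_nonneg _)
      _ = L * t := by rw [htk, hL]; ring
  -- integrate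
  have habs : |h 1| ≤ L / 2 := by
    have h1 : |h 1| = |∫ t in (0:ℝ)..1, (g t - g 0)| := by rw [hFTC, hh0, sub_zero]
    rw [h1]
    have h2 : |∫ t in (0:ℝ)..1, (g t - g 0)| ≤ ∫ t in (0:ℝ)..1, |g t - g 0| := by
      simpa [Real.norm_eq_abs] using
        intervalIntegral.norm_integral_le_integral_norm (f := fun t => g t - g 0)
          (a := (0:ℝ)) (b := 1) zero_le_one
    refine h2.trans ?_
    have h3 : ∫ t in (0:ℝ)..1, |g t - g 0| ≤ ∫ t in (0:ℝ)..1, L * t := by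
      refine intervalIntegral.integral_mono_on zero_le_one ?_ ?_ hbound
      · exact ((hgcont.sub continuous_const).abs).intervalIntegrable 0 1
      · exact (continuous_const.mul continuous_id).intervalIntegrable 0 1
    refine h3.trans ?_
    rw [intervalIntegral.integral_const_mul, integral_id]
    norm_num
    linarith
  rw [hh1] at habs
  refine habs.trans ?_
  -- final estimate : L / 2 ≤ RHS
  have hMle : M ^ (p - 2) ≤ (2:ℝ) ^ (p - 2) * (‖y‖ ^ (p - 2) + ‖k‖ ^ (p - 2)) := by
    have h2max : M ≤ 2 * max ‖y‖ ‖k‖ := by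
      rcases le_total ‖y‖ ‖k‖ with h | h
      · rw [max_eq_right h, hM]; linarith
      · rw [max_eq_left h, hM]; linarith
    have hmax0 : (0:ℝ) ≤ max ‖y‖ ‖k‖ := le_max_iff.2 (Or.inl (norm_nonneg _))
    calc M ^ (p - 2) ≤ (2 * max ‖y‖ ‖k‖) ^ (p - 2) := Real.rpow_le_rpow hM0 h2max hq0
      _ = (2:ℝ) ^ (p - 2) * max ‖y‖ ‖k‖ ^ (p - 2) := Real.mul_rpow (by norm_num) hmax0
      _ ≤ (2:ℝ) ^ (p - 2) * (‖y‖ ^ (p - 2) + ‖k‖ ^ (p - 2)) := by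
          refine mul_le_mul_of_nonneg_left ?_ (Real.rpow_nonneg (by norm_num) _)
          rcases le_total ‖y‖ ‖k‖ with h | h
          · rw [max_eq_right h]
            linarith [Real.rpow_nonneg (norm_nonneg y) (p - 2)]
          · rw [max_eq_left h]
            linarith [Real.rpow_nonneg (norm_nonneg k) (p - 2)]
  have h2eq : (2:ℝ) ^ (p - 2) = 2 * (2:ℝ) ^ (p - 3) := by
    rw [show p - 2 = 1 + (p - 3) by ring, Real.rpow_add (by norm_num), Real.rpow_one]
  have hknorm2 : ‖k‖ * ‖k‖ = ‖k‖ ^ (2:ℝ) := by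
    rw [show (2:ℝ) = ((2:ℕ):ℝ) by norm_num, Real.rpow_natCast]
    ring
  have hkp : ‖k‖ ^ (p - 2) * ‖k‖ ^ (2:ℝ) = ‖k‖ ^ p := by
    rw [← Real.rpow_add' (norm_nonneg k) (by linarith : p - 2 + 2 ≠ 0)]
    norm_num
  have hk2 : (0:ℝ) ≤ ‖k‖ ^ (2:ℝ) := Real.rpow_nonneg (norm_nonneg k) _
  have hfactor : (0:ℝ) ≤ p * (p - 1) / 2 * (‖k‖ ^ (2:ℝ)) :=
    mul_nonneg (div_nonneg (mul_nonneg hp0.le (by linarith)) (by norm_num)) hk2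
  calc L / 2 = p * (p - 1) / 2 * (‖k‖ ^ (2:ℝ)) * M ^ (p - 2) := by
        rw [hL, hknorm2]; ring
    _ ≤ p * (p - 1) / 2 * (‖k‖ ^ (2:ℝ)) * ((2:ℝ) ^ (p - 2) * (‖y‖ ^ (p - 2) + ‖k‖ ^ (p - 2))) :=
        mul_le_mul_of_nonneg_left hMle hfactor
    _ = (p ^ 2 - p) * (2:ℝ) ^ (p - 3) * (‖y‖ ^ (p - 2) * ‖k‖ ^ (2:ℝ) + ‖k‖ ^ (p - 2) * ‖k‖ ^ (2:ℝ)) := by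
        rw [h2eq]; ring
    _ = (p ^ 2 - p) * (2:ℝ) ^ (p - 3) * (‖y‖ ^ (p - 2) * ‖k‖ ^ (2 : ℝ) + ‖k‖ ^ p) := by
        rw [hkp]
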